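/- Let Z₁,…,Z_n be i.i.d. copies of a positive random variable Z with E[Z^(1+ε)] ≤ ν for some ε ∈ [0,1], and λ < 0. Then E[(1/λ) log((1/n)Σᵢ e^{λZᵢ})] ≥ E[Z] − (|λ|^ε/(1+ε)) ν − (1/(2n|λ|)) Var(e^{λZ}). (Upper bound on the bias of the LSE estimator.) -/

import Mathlib

/-!
Write `Ȳ = (1/n) ∑ᵢ exp (λ Zᵢ)`. By Jensen for the concave `log`, `E[log Ȳ] ≤ log E[Ȳ] = log E[exp (λ Z)]`,
and dividing by `λ < 0` turns this into a lower bound by `(1/λ) log E[exp (λ Z)]`. The elementary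
inequality `exp (-y) ≤ 1 - y + y^(1+ε)/(1+ε)` for `y ≥ 0`, together with `log m ≤ m - 1`, bounds
the latter below by `E[Z] - |λ|^ε/(1+ε) E[Z^(1+ε)]`. The variance term is nonnegative, so it only
weakens the bound.
-/

open MeasureTheory ProbabilityTheory Real

namespace Real

lemma one_sub_exp_neg_le_rpow {ε y : ℝ} (hε0 : 0 ≤ ε) (hε1 : ε ≤ 1) (hy : 0 ≤ y) :
    1 - exp (-y) ≤ y ^ ε := by
  rcases le_total y 1 with hy1 | hy1
  · calc 1 - exp (-y) ≤ y := by linarith [add_one_le_exp (-y)]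
      _ = y ^ (1 : ℝ) := (rpow_one y).symm
      _ ≤ y ^ ε := rpow_le_rpow_of_exponent_ge' hy hy1 hε0 hε1
  · linarith [exp_pos (-y), one_le_rpow hy1 hε0]

lemma exp_neg_le_one_sub_add_rpow_div {ε y : ℝ} (hε0 : 0 ≤ ε) (hε1 : ε ≤ 1) (hy : 0 ≤ y) :
    exp (-y) ≤ 1 - y + y ^ (1 + ε) / (1 + ε) := by
  have hε : (1 + ε) ≠ 0 := by positivity
  set f : ℝ → ℝ := fun t => 1 - t + t ^ (1 + ε) / (1 + ε) - exp (-t)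
  have hderiv (t : ℝ) : HasDerivAt f (-1 + t ^ ε + exp (-t)) t := by
    have hpow := hasDerivAt_rpow_const (x := t) (p := 1 + ε) (Or.inr (by linarith))
    refine ((((hasDerivAt_const t 1).sub (hasDerivAt_id t)).add (hpow.div_const _)).sub
      (hasDerivAt_neg t).exp).congr_deriv ?_
    rw [add_sub_cancel_left, mul_div_cancel_left₀ _ hε]
    ring
  have hmono : MonotoneOn f (Set.Ici 0) := by
    refine monotoneOn_of_hasDerivWithinAt_nonneg (convex_Ici 0)
      (fun t _ => (hderiv t).continuousAt.continuousWithinAt)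
      (fun t _ => (hderiv t).hasDerivWithinAt) fun t ht => ?_
    rw [interior_Ici] at ht
    linarith [one_sub_exp_neg_le_rpow hε0 hε1 (le_of_lt ht)]
  have := hmono Set.self_mem_Ici hy hy
  simp only [f, sub_zero, neg_zero, exp_zero, zero_rpow hε, zero_div, add_zero, sub_self] at this
  linarith

end Real

section

variable {Ω : Type*} [MeasurableSpace Ω] {μ : Measure Ω}

lemma integrable_exp_mul_of_nonpos [IsFiniteMeasure μ] {X : Ω → ℝ} {l : ℝ} (hl : l ≤ 0)
    (hX : AEMeasurable X μ) (hX0 : 0 ≤ᵐ[μ] X) :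
    Integrable (fun ω => exp (l * X ω)) μ := by
  refine Integrable.mono' (integrable_const 1) (hX.const_mul l).exp.aestronglyMeasurable ?_
  filter_upwards [hX0] with ω hω
  rw [norm_of_nonneg (exp_pos _).le, exp_le_one_iff]
  exact mul_nonpos_of_nonpos_of_nonneg hl hω

lemma integral_log_le_log_integral [IsProbabilityMeasure μ] {Y : Ω → ℝ} (hY0 : ∀ᵐ ω ∂μ, 0 < Y ω)
    (hY : Integrable Y μ) (hlogY : Integrable (fun ω => log (Y ω)) μ) :
    ∫ ω, log (Y ω) ∂μ ≤ log (∫ ω, Y ω ∂μ) := by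
  have hexplog : (fun ω => exp (log (Y ω))) =ᵐ[μ] Y := by
    filter_upwards [hY0] with ω hω using exp_log hω
  have hjensen : exp (∫ ω, log (Y ω) ∂μ) ≤ ∫ ω, Y ω ∂μ := by
    rw [← integral_congr_ae hexplog]
    exact convexOn_exp.map_integral_le continuous_exp.continuousOn isClosed_univ
      (ae_of_all _ fun _ => Set.mem_univ _) hlogY ((integrable_congr hexplog).mpr hY)
  exact (le_log_iff_exp_le ((exp_pos _).trans_le hjensen)).mpr hjensen

variable {n : ℕ} {Z : Fin n → Ω → ℝ}

lemma integral_mean_comp_eq_of_identDistrib (hn : 0 < n) {Z0 : Ω → ℝ}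
    (hid : ∀ i, IdentDistrib (Z i) Z0 μ μ) {f : ℝ → ℝ} (hf : Measurable f)
    (hfi : Integrable (fun ω => f (Z0 ω)) μ) :
    ∫ ω, 1 / (n : ℝ) * ∑ i, f (Z i ω) ∂μ = ∫ ω, f (Z0 ω) ∂μ := by
  have hcomp (i : Fin n) : IdentDistrib (fun ω => f (Z i ω)) (fun ω => f (Z0 ω)) μ μ :=
    (hid i).comp hf
  rw [integral_const_mul, integral_finsetSum _ fun i _ => (hcomp i).integrable_iff.mpr hfi]
  simp only [fun i => (hcomp i).integral_eq, Finset.sum_const, Finset.card_univ,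
    Fintype.card_fin, nsmul_eq_mul]
  field_simp

lemma integrable_log_mean_exp_mul [IsFiniteMeasure μ] {l : ℝ} (hl : l ≤ 0) (i : Fin n)
    (hZ : ∀ j, AEMeasurable (Z j) μ) (hZ0 : ∀ j, 0 ≤ᵐ[μ] Z j) (hZi : Integrable (Z i) μ) :
    Integrable (fun ω => log (1 / (n : ℝ) * ∑ j, exp (l * Z j ω))) μ := by
  have hn : (0 : ℝ) < n := by exact_mod_cast i.pos
  have hmeas : AEMeasurable (fun ω => 1 / (n : ℝ) * ∑ j, exp (l * Z j ω)) μ :=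
    (Finset.aemeasurable_fun_sum _ fun j _ => ((hZ j).const_mul l).exp).const_mul _
  refine Integrable.mono' (g := fun ω => log n - l * Z i ω)
    ((integrable_const (log n)).sub (hZi.const_mul l)) hmeas.log.aestronglyMeasurable ?_
  filter_upwards [ae_all_iff.mpr hZ0] with ω hω
  have hexp_le_one (j : Fin n) : exp (l * Z j ω) ≤ 1 :=
    exp_le_one_iff.mpr (mul_nonpos_of_nonpos_of_nonneg hl (hω j))
  have hlower : 1 / (n : ℝ) * exp (l * Z i ω) ≤ 1 / (n : ℝ) * ∑ j, exp (l * Z j ω) :=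
    mul_le_mul_of_nonneg_left (Finset.single_le_sum (f := fun j => exp (l * Z j ω))
      (fun j _ => (exp_pos _).le) (Finset.mem_univ i)) (by positivity)
  have hupper : 1 / (n : ℝ) * ∑ j, exp (l * Z j ω) ≤ 1 := by
    calc 1 / (n : ℝ) * ∑ j, exp (l * Z j ω) ≤ 1 / (n : ℝ) * ∑ _j : Fin n, 1 :=
          mul_le_mul_of_nonneg_left (Finset.sum_le_sum fun j _ => hexp_le_one j) (by positivity)
      _ = 1 := by simp [hn.ne']
  have hpos : 0 < 1 / (n : ℝ) * exp (l * Z i ω) := by positivity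
  have hlog_lower := log_le_log hpos hlower
  rw [log_mul (by positivity) (exp_ne_zero _), log_exp, log_div one_ne_zero hn.ne', log_one]
    at hlog_lower
  rw [norm_eq_abs, abs_of_nonpos (log_nonpos (hpos.trans_le hlower).le hupper)]
  linarith

variable [IsProbabilityMeasure μ] {X : Ω → ℝ} {l ε : ℝ}

lemma integral_exp_mul_le (hl : l ≤ 0) (hε0 : 0 ≤ ε) (hε1 : ε ≤ 1) (hX0 : 0 ≤ᵐ[μ] X)
    (hX : Integrable X μ) (hXε : Integrable (fun ω => X ω ^ (1 + ε)) μ) :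
    ∫ ω, exp (l * X ω) ∂μ ≤
      1 + l * ∫ ω, X ω ∂μ + |l| ^ (1 + ε) / (1 + ε) * ∫ ω, X ω ^ (1 + ε) ∂μ := by
  have hbound : ∀ᵐ ω ∂μ,
      exp (l * X ω) ≤ 1 + l * X ω + |l| ^ (1 + ε) / (1 + ε) * X ω ^ (1 + ε) := by
    filter_upwards [hX0] with ω hω
    have := exp_neg_le_one_sub_add_rpow_div hε0 hε1 (mul_nonneg (abs_nonneg l) hω)
    rw [mul_rpow (abs_nonneg l) hω] at this
    rw [abs_of_nonpos hl] at this ⊢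
    convert this using 2 <;> ring
  have hlin : Integrable (fun ω => 1 + l * X ω) μ := (integrable_const 1).add (hX.const_mul l)
  have hrhs : Integrable (fun ω => 1 + l * X ω + |l| ^ (1 + ε) / (1 + ε) * X ω ^ (1 + ε)) μ :=
    hlin.add (hXε.const_mul _)
  refine (integral_mono_ae (integrable_exp_mul_of_nonpos hl hX.aemeasurable hX0) hrhs
    hbound).trans_eq ?_
  rw [integral_add hlin (hXε.const_mul _),
    integral_add (integrable_const 1) (hX.const_mul l), integral_const_mul, integral_const_mul,
    integral_const, probReal_univ, one_smul]

lemma integral_sub_le_inv_mul_log_integral_exp_mul (hl : l < 0) (hε0 : 0 ≤ ε) (hε1 : ε ≤ 1)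
    (hX0 : 0 ≤ᵐ[μ] X) (hX : Integrable X μ) (hXε : Integrable (fun ω => X ω ^ (1 + ε)) μ) :
    ∫ ω, X ω ∂μ - |l| ^ ε / (1 + ε) * ∫ ω, X ω ^ (1 + ε) ∂μ ≤
      1 / l * log (∫ ω, exp (l * X ω) ∂μ) := by
  have hpos : 0 < ∫ ω, exp (l * X ω) ∂μ :=
    integral_exp_pos (integrable_exp_mul_of_nonpos hl.le hX.aemeasurable hX0)
  have hmgf := integral_exp_mul_le hl.le hε0 hε1 hX0 hX hXε
  have habs : |l| ^ (1 + ε) = -l * |l| ^ ε := by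
    rw [rpow_add (abs_pos.mpr hl.ne), rpow_one, abs_of_neg hl]
  rw [one_div_mul_eq_div, le_div_iff_of_neg hl]
  calc log (∫ ω, exp (l * X ω) ∂μ) ≤ (∫ ω, exp (l * X ω) ∂μ) - 1 := log_le_sub_one_of_pos hpos
    _ ≤ l * ∫ ω, X ω ∂μ + |l| ^ (1 + ε) / (1 + ε) * ∫ ω, X ω ^ (1 + ε) ∂μ := by linarith
    _ = _ := by rw [habs]; ring

end

open MeasureTheory ProbabilityTheory in
theorem stmt_15_general {Ω : Type*} [MeasurableSpace Ω] (μ : Measure Ω) [IsProbabilityMeasure μ]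
    (n : ℕ) (hn : 0 < n) (Z : Fin n → Ω → ℝ) (Z0 : Ω → ℝ) (l ε ν : ℝ) (hl : l < 0)
    (hε0 : 0 ≤ ε) (hε1 : ε ≤ 1)
    (hid : ∀ i, IdentDistrib (Z i) Z0 μ μ)
    (hpos : ∀ᵐ ω ∂μ, 0 < Z0 ω)
    (hint : Integrable Z0 μ)
    (hint' : Integrable (fun ω => Z0 ω ^ (1 + ε)) μ)
    (hmom : ∫ ω, Z0 ω ^ (1 + ε) ∂μ ≤ ν) :
    (∫ ω, Z0 ω ∂μ) - (|l| ^ ε / (1 + ε)) * ν -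
        (1 / (2 * n * |l|)) * variance (fun ω => Real.exp (l * Z0 ω)) μ ≤
      ∫ ω, (1 / l) * Real.log ((1 / (n : ℝ)) * ∑ i, Real.exp (l * Z i ω)) ∂μ := by
  have hZ00 : 0 ≤ᵐ[μ] Z0 := hpos.mono fun _ h => h.le
  have hZ0 (i : Fin n) : 0 ≤ᵐ[μ] Z i := (hid i).symm.ae_snd measurableSet_Ici hZ00
  have hexp := integrable_exp_mul_of_nonpos hl.le hint.aemeasurable hZ00
  have hmean := integral_mean_comp_eq_of_identDistrib hn hid
    (by fun_prop : Measurable fun x => exp (l * x)) hexp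
  have hlog := integrable_log_mean_exp_mul hl.le ⟨0, hn⟩ (fun i => (hid i).aemeasurable_fst) hZ0
    ((hid ⟨0, hn⟩).integrable_iff.mpr hint)
  have hmean_pos : ∀ᵐ ω ∂μ, 0 < 1 / (n : ℝ) * ∑ i, exp (l * Z i ω) := ae_of_all _ fun ω => by
    have : Nonempty (Fin n) := ⟨⟨0, hn⟩⟩
    exact mul_pos (by positivity) (Finset.sum_pos (fun i _ => exp_pos _) Finset.univ_nonempty)
  have hmean_int : Integrable (fun ω => 1 / (n : ℝ) * ∑ i, exp (l * Z i ω)) μ :=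
    (integrable_finsetSum _ fun i _ =>
      integrable_exp_mul_of_nonpos hl.le (hid i).aemeasurable_fst (hZ0 i)).const_mul _
  have hjensen := integral_log_le_log_integral hmean_pos hmean_int hlog
  have hvar : 0 ≤ 1 / (2 * n * |l|) * variance (fun ω => exp (l * Z0 ω)) μ := by
    have := variance_nonneg (fun ω => exp (l * Z0 ω)) μ
    positivity
  calc _ ≤ ∫ ω, Z0 ω ∂μ - |l| ^ ε / (1 + ε) * ∫ ω, Z0 ω ^ (1 + ε) ∂μ := by
        have : 0 ≤ |l| ^ ε / (1 + ε) := by positivity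
        linarith [mul_le_mul_of_nonneg_left hmom this]
    _ ≤ 1 / l * log (∫ ω, exp (l * Z0 ω) ∂μ) :=
        integral_sub_le_inv_mul_log_integral_exp_mul hl hε0 hε1 hZ00 hint hint'
    _ ≤ 1 / l * ∫ ω, log (1 / (n : ℝ) * ∑ i, exp (l * Z i ω)) ∂μ := by
        rw [← hmean]
        exact mul_le_mul_of_nonpos_left hjensen (one_div_neg.mpr hl).le
    _ = _ := (integral_const_mul _ _).symm

open MeasureTheory ProbabilityTheory in
theorem stmt_15 {Ω : Type*} [MeasurableSpace Ω] (μ : Measure Ω) [IsProbabilityMeasure μ]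
    (n : ℕ) (hn : 0 < n) (Z : Fin n → Ω → ℝ) (Z0 : Ω → ℝ) (l ε ν : ℝ) (hl : l < 0)
    (hε0 : 0 ≤ ε) (hε1 : ε ≤ 1)
    (hmeas : ∀ i, Measurable (Z i))
    (hindep : iIndepFun Z μ)
    (hid : ∀ i, IdentDistrib (Z i) Z0 μ μ)
    (hpos : ∀ᵐ ω ∂μ, 0 < Z0 ω)
    (hint : Integrable Z0 μ)
    (hint' : Integrable (fun ω => Z0 ω ^ (1 + ε)) μ)
    (hmom : ∫ ω, Z0 ω ^ (1 + ε) ∂μ ≤ ν) :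
    (∫ ω, Z0 ω ∂μ) - (|l| ^ ε / (1 + ε)) * ν -
        (1 / (2 * n * |l|)) * variance (fun ω => Real.exp (l * Z0 ω)) μ ≤
      ∫ ω, (1 / l) * Real.log ((1 / (n : ℝ)) * ∑ i, Real.exp (l * Z i ω)) ∂μ :=
  stmt_15_general μ n hn Z Z0 l ε ν hl hε0 hε1 hid hpos hint hint' hmom
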